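/- arXiv:1602.02049 — 5 statements merged into one kernel-verified Lean document; each statement's English description precedes it below -/
import Mathlib

section
/- Let K be a field, let A ∈ K[x]^{m×n} be u-column reduced for a shift u ∈ ℤ^m, with no zero columns and with cdeg_u A = v. Then for any matrix B ∈ K[x]^{n×k} and any w ∈ ℤ^k, the v-column degrees of B satisfy cdeg_v B = w if and only if the u-column degrees of the product satisfy cdeg_u (A·B) = w. -/
open Polynomial Matrix

variable {K : Type*} [Field K]

/-- The degree of a polynomial, as an element of `WithBot ℤ` (`⊥` for the zero polynomial). -/
noncomputable def degZ (p : Polynomial K) : WithBot ℤ :=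
  p.degree.map fun n : ℕ => (n : ℤ)

/-- The shifted column degree `cdeg_u p = max_i (deg p_i + u_i)` of a vector of polynomials. -/
noncomputable def cdegS {m : Type*} [Fintype m] (u : m → ℤ) (p : m → Polynomial K) : WithBot ℤ :=
  Finset.univ.sup fun i => degZ (p i) + (u i : WithBot ℤ)

/-- The row degree of row `i` of a polynomial matrix. -/
noncomputable def rdeg {m n : Type*} [Fintype n] (P : Matrix m n (Polynomial K)) (i : m) :
    WithBot ℕ :=
  Finset.univ.sup fun j => (P i j).degree

/-- The shifted leading coefficient matrix `lcoeff (x^u · A · x^{-v})`. -/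
noncomputable def lcoeffS {m n : Type*} (u : m → ℤ) (A : Matrix m n (Polynomial K)) (v : n → ℤ) :
    Matrix m n K :=
  Matrix.of fun i j => if 0 ≤ v j - u i then (A i j).coeff (v j - u i).toNat else 0

/-- A matrix over `K` has full column rank if its columns are linearly independent over `K`. -/
def FullColRankK {m n : Type*} (M : Matrix m n K) : Prop :=
  LinearIndependent K fun j => fun i => M i j

/-- `A` is `u`-column reduced with `u`-column degrees `v`. -/
def IsColReducedWith {m n : Type*} [Fintype m] (u : m → ℤ) (A : Matrix m n (Polynomial K))
    (v : n → ℤ) : Prop :=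
  (∀ j, cdegS u (fun i => A i j) = (v j : WithBot ℤ)) ∧ FullColRankK (lcoeffS u A v)

/-- `A` is `u`-column reduced. -/
def IsColReducedS {m n : Type*} [Fintype m] (u : m → ℤ) (A : Matrix m n (Polynomial K)) : Prop :=
  ∃ v : n → ℤ, IsColReducedWith u A v

/-- `F` is column reduced with (ordinary) column degrees `d`. -/
def IsColReducedNat {m n : Type*} [Fintype m] (F : Matrix m n (Polynomial K)) (d : n → ℕ) : Prop :=
  IsColReducedWith (fun _ => (0 : ℤ)) F (fun j => (d j : ℤ))

/-- `N` is a (right) kernel basis of `F`. -/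
def IsKernelBasis {m n k : Type*} [Fintype n] [Fintype k] (F : Matrix m n (Polynomial K))
    (N : Matrix n k (Polynomial K)) : Prop :=
  (LinearIndependent (Polynomial K) fun j => fun i => N i j) ∧
  F * N = 0 ∧
  ∀ q : n → Polynomial K, F.mulVec q = 0 → ∃ p : k → Polynomial K, N.mulVec p = q

/-- `N` is an `s`-minimal kernel basis of `F`. -/
def IsMinimalKernelBasis {m n k : Type*} [Fintype n] [Fintype k] (F : Matrix m n (Polynomial K))
    (s : n → ℤ) (N : Matrix n k (Polynomial K)) : Prop :=
  IsKernelBasis F N ∧ IsColReducedS s N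

/-- `T` is a column basis of `F`. -/
def IsColBasis {m n r : Type*} [Fintype n] [Fintype r] (F : Matrix m n (Polynomial K))
    (T : Matrix m r (Polynomial K)) : Prop :=
  (LinearIndependent (Polynomial K) fun j => fun i => T i j) ∧
  ∀ q : m → Polynomial K, (∃ p, F.mulVec p = q) ↔ (∃ p, T.mulVec p = q)

/-- `H` is in (column) Hermite normal form. -/
def IsHermiteForm {n : ℕ} (H : Matrix (Fin n) (Fin n) (Polynomial K)) : Prop :=
  (∀ i j : Fin n, i < j → H i j = 0) ∧
  (∀ i : Fin n, (H i i).Monic) ∧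
  (∀ i j : Fin n, j < i → (H i j).degree < (H i i).degree)

/-- `H` is the Hermite normal form of `F`. -/
def IsHermiteFormOf {n : ℕ} (F H : Matrix (Fin n) (Fin n) (Polynomial K)) : Prop :=
  IsHermiteForm H ∧ ∃ U : Matrix (Fin n) (Fin n) (Polynomial K), IsUnit U.det ∧ F * U = H

/-! If `t = cdeg_v p`, every entry of `X^u · A · p` has degree at most `t`, and its coefficient of
`X^t` is `lcoeffS u A v` applied to the vector of `X^t`-coefficients of `X^v · p`. That vector is
nonzero because the maximum defining `cdeg_v p` is attained, so full column rank of the leading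
coefficient matrix gives `cdeg_u (A · p) = cdeg_v p`; apply this to each column of `B`. -/

section Polynomials

variable {ι : Type*}

lemma degZ_zero : degZ (0 : K[X]) = ⊥ := rfl

lemma degZ_of_ne_zero {p : K[X]} (hp : p ≠ 0) : degZ p = ((p.natDegree : ℤ) : WithBot ℤ) := by
  rw [degZ, degree_eq_natDegree hp, Nat.cast_withBot, WithBot.map_coe]

lemma degZ_mul (p q : K[X]) : degZ (p * q) = degZ p + degZ q := by
  simp only [degZ, degree_mul]
  exact WithBot.map_add (Nat.castAddMonoidHom ℤ) _ _

lemma degZ_le_coe_iff {p : K[X]} (hp : p ≠ 0) {d : ℤ} :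
    degZ p ≤ d ↔ (p.natDegree : ℤ) ≤ d := by
  rw [degZ_of_ne_zero hp, WithBot.coe_le_coe]

lemma degZ_add_coe_le_iff {p : K[X]} {c d : ℤ} :
    degZ p + (c : WithBot ℤ) ≤ d ↔ degZ p ≤ ((d - c : ℤ) : WithBot ℤ) := by
  by_cases hp : p = 0
  · simp [hp, degZ_zero]
  rw [degZ_of_ne_zero hp, ← WithBot.coe_add, WithBot.coe_le_coe, WithBot.coe_le_coe]
  omega

lemma degZ_sum_add_le {s : Finset ι} {f : ι → K[X]} {c : ℤ} {T : WithBot ℤ}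
    (h : ∀ i ∈ s, degZ (f i) + c ≤ T) : degZ (∑ i ∈ s, f i) + c ≤ T := by
  rcases s.eq_empty_or_nonempty with rfl | hs
  · simp [degZ_zero]
  obtain ⟨i, hi, hmax⟩ := Finset.exists_mem_eq_sup s hs (fun i => (f i).degree)
  have hsum : degZ (∑ i ∈ s, f i) ≤ degZ (f i) :=
    Nat.mono_cast.withBot_map (hmax ▸ degree_sum_le s f)
  exact le_trans (by gcongr) (h i hi)

noncomputable def coeffInt (p : K[X]) (k : ℤ) : K :=
  if 0 ≤ k then p.coeff k.toNat else 0

lemma coeffInt_zero (k : ℤ) : coeffInt (0 : K[X]) k = 0 := by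
  simp [coeffInt]

lemma coeffInt_sum (s : Finset ι) (f : ι → K[X]) (k : ℤ) :
    coeffInt (∑ i ∈ s, f i) k = ∑ i ∈ s, coeffInt (f i) k := by
  unfold coeffInt
  split_ifs <;> simp

lemma coeffInt_natDegree (p : K[X]) : coeffInt p p.natDegree = p.leadingCoeff := by
  simp [coeffInt]

lemma le_degZ_of_coeffInt_ne_zero {p : K[X]} {k : ℤ} (h : coeffInt p k ≠ 0) :
    (k : WithBot ℤ) ≤ degZ p := by
  unfold coeffInt at h
  split_ifs at h with hk
  · have hp : p ≠ 0 := by rintro rfl; simp at h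
    rw [degZ_of_ne_zero hp, WithBot.coe_le_coe]
    have := le_natDegree_of_ne_zero h
    omega
  · exact absurd rfl h

lemma coeffInt_mul_of_degZ_le {p q : K[X]} {d e : ℤ} (hp : degZ p ≤ d) (hq : degZ q ≤ e) :
    coeffInt (p * q) (d + e) = coeffInt p d * coeffInt q e := by
  rcases eq_or_ne p 0 with rfl | hp0
  · simp [coeffInt_zero]
  rcases eq_or_ne q 0 with rfl | hq0
  · simp [coeffInt_zero]
  rw [degZ_le_coe_iff hp0] at hp
  rw [degZ_le_coe_iff hq0] at hq
  have hde : (d + e).toNat = d.toNat + e.toNat := by omega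
  simp only [coeffInt, if_pos (show 0 ≤ d by omega), if_pos (show 0 ≤ e by omega),
    if_pos (show 0 ≤ d + e by omega), hde]
  exact coeff_mul_add_eq_of_natDegree_le (by omega) (by omega)

end Polynomials

section ColumnDegrees

variable {m n : Type*}

lemma degZ_add_le_cdegS [Fintype m] (u : m → ℤ) (p : m → K[X]) (i : m) :
    degZ (p i) + (u i : WithBot ℤ) ≤ cdegS u p :=
  Finset.le_sup (f := fun i => degZ (p i) + (u i : WithBot ℤ)) (Finset.mem_univ i)

lemma exists_coeffInt_ne_zero_of_cdegS_eq [Fintype n] {v : n → ℤ} {p : n → K[X]} {t : ℤ}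
    (h : cdegS v p = t) : ∃ j, coeffInt (p j) (t - v j) ≠ 0 := by
  rcases isEmpty_or_nonempty n with hn | hn
  · simp [cdegS] at h
  obtain ⟨j, -, hj⟩ := Finset.exists_mem_eq_sup Finset.univ Finset.univ_nonempty
    (fun j => degZ (p j) + (v j : WithBot ℤ))
  have hpj : p j ≠ 0 := by
    rintro hpj
    rw [cdegS, hj, hpj, degZ_zero, WithBot.bot_add] at h
    exact WithBot.bot_ne_coe h
  rw [cdegS, hj, degZ_of_ne_zero hpj, ← WithBot.coe_add, WithBot.coe_inj] at h
  refine ⟨j, ?_⟩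
  rw [← h, add_sub_cancel_right, coeffInt_natDegree]
  exact leadingCoeff_ne_zero.mpr hpj

variable {u : m → ℤ} {v : n → ℤ} {A : Matrix m n K[X]}

lemma IsColReducedWith.degZ_add_le [Fintype m] (hred : IsColReducedWith u A v) (i : m) (j : n) :
    degZ (A i j) + (u i : WithBot ℤ) ≤ v j :=
  (degZ_add_le_cdegS u (fun i => A i j) i).trans (hred.1 j).le

lemma cdegS_mulVec_le [Fintype m] [Fintype n]
    (hA : ∀ i j, degZ (A i j) + (u i : WithBot ℤ) ≤ v j) (p : n → K[X]) :
    cdegS u (A *ᵥ p) ≤ cdegS v p :=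
  Finset.sup_le fun i _ => degZ_sum_add_le fun j _ =>
    calc degZ (A i j * p j) + (u i : WithBot ℤ)
        = (degZ (A i j) + u i) + degZ (p j) := by rw [degZ_mul, add_right_comm]
      _ ≤ v j + degZ (p j) := by gcongr; exact hA i j
      _ = degZ (p j) + v j := add_comm _ _
      _ ≤ cdegS v p := degZ_add_le_cdegS v p j

lemma coeffInt_mulVec [Fintype n] (hA : ∀ i j, degZ (A i j) + (u i : WithBot ℤ) ≤ v j)
    {p : n → K[X]} {t : ℤ} (hp : cdegS v p ≤ t) (i : m) :
    coeffInt ((A *ᵥ p) i) (t - u i) =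
      (lcoeffS u A v *ᵥ fun j => coeffInt (p j) (t - v j)) i := by
  simp only [mulVec, dotProduct, coeffInt_sum]
  refine Finset.sum_congr rfl fun j _ => ?_
  rw [show t - u i = (v j - u i) + (t - v j) by ring,
    coeffInt_mul_of_degZ_le (degZ_add_coe_le_iff.mp (hA i j))
      (degZ_add_coe_le_iff.mp ((degZ_add_le_cdegS v p j).trans hp))]
  rfl

lemma le_cdegS_mulVec [Fintype m] [Fintype n] (hred : IsColReducedWith u A v) (p : n → K[X]) :
    cdegS v p ≤ cdegS u (A *ᵥ p) := by
  induction hdeg : cdegS v p using WithBot.recBotCoe with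
  | bot => exact bot_le
  | coe t =>
    set c : n → K := fun j => coeffInt (p j) (t - v j)
    have hc : c ≠ 0 := fun hc =>
      let ⟨j, hj⟩ := exists_coeffInt_ne_zero_of_cdegS_eq hdeg
      hj (congr_fun hc j)
    obtain ⟨i, hi⟩ : ∃ i, (lcoeffS u A v *ᵥ c) i ≠ 0 := by
      by_contra! h
      exact hc ((Matrix.mulVec_injective_iff (M := lcoeffS u A v)).mpr hred.2
        ((funext h).trans (mulVec_zero _).symm))
    rw [← coeffInt_mulVec hred.degZ_add_le hdeg.le] at hi
    calc (t : WithBot ℤ) = ((t - u i : ℤ) : WithBot ℤ) + u i := by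
          rw [← WithBot.coe_add, sub_add_cancel]
      _ ≤ degZ ((A *ᵥ p) i) + u i := by gcongr; exact le_degZ_of_coeffInt_ne_zero hi
      _ ≤ cdegS u (A *ᵥ p) := degZ_add_le_cdegS u _ i

theorem cdegS_mulVec [Fintype m] [Fintype n] (hred : IsColReducedWith u A v) (p : n → K[X]) :
    cdegS u (A *ᵥ p) = cdegS v p :=
  le_antisymm (cdegS_mulVec_le hred.degZ_add_le p) (le_cdegS_mulVec hred p)

end ColumnDegrees

theorem predictable_degree_general {m n k : ℕ} (u : Fin m → ℤ) (v : Fin n → ℤ)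
    (A : Matrix (Fin m) (Fin n) (Polynomial K))
    (hred : IsColReducedWith u A v)
    (B : Matrix (Fin n) (Fin k) (Polynomial K)) (w : Fin k → ℤ) :
    (∀ j, cdegS v (fun i => B i j) = (w j : WithBot ℤ)) ↔
      (∀ j, cdegS u (fun i => (A * B) i j) = (w j : WithBot ℤ)) := by
  have hcol (j : Fin k) : (fun i => (A * B) i j) = A *ᵥ fun i => B i j := rfl
  simp only [hcol, cdegS_mulVec hred]

/-- predictable degree property, Lemma 1.
If `A` is `u`-column reduced with no zero columns and `cdeg_u A = v`, then for any `B` and any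
integer tuple `w`, `cdeg_v B = w` iff `cdeg_u (A · B) = w`. -/
theorem predictable_degree {m n k : ℕ} (u : Fin m → ℤ) (v : Fin n → ℤ)
    (A : Matrix (Fin m) (Fin n) (Polynomial K))
    (hred : IsColReducedWith u A v)
    (hnz : ∀ j : Fin n, ∃ i, A i j ≠ 0)
    (B : Matrix (Fin n) (Fin k) (Polynomial K)) (w : Fin k → ℤ) :
    (∀ j, cdegS v (fun i => B i j) = (w j : WithBot ℤ)) ↔
      (∀ j, cdegS u (fun i => (A * B) i j) = (w j : WithBot ℤ)) :=
  predictable_degree_general u v A hred B w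
end

section
/- Let K be a field and let F ∈ K[x]^{m×n} be partitioned as F = [F_u; F_d] with F_u its top m_1 rows and F_d its bottom m − m_1 rows. Let G_1 ∈ K[x]^{m_1×r} be a column basis of F_u and N ∈ K[x]^{n×k} a kernel basis of F_u. Then there exists a matrix V ∈ K[x]^{n×r} such that U = [V, N] ∈ K[x]^{n×(r+k)} is unimodular (in particular r + k = n), F_u·V = G_1, and consequently F·U has the block lower triangular form [[G_1, 0], [F_d·V, G_2]] with G_2 = F_d·N. Moreover, if F is square and nonsingular, then G_1 and G_2 are square and nonsingular. -/
/-!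
Choose `V` with `F_u V = G₁`, possible column by column since `G₁` generates the column space of
`F_u`. Then `[V, N]` acts bijectively on `K[x]^n`: a vector `q` splits as `V a + N b` where
`F_u q = G₁ a`, because `q - V a` lies in the kernel of `F_u`; and `V a + N b = 0` forces
`G₁ a = 0`, hence `a = 0` and then `b = 0`. A bijective polynomial matrix has a two-sided inverse,
and since `K[x]` has invariant basis number its two sides have equal size. When `F` is square and
nonsingular, `G₁` and `F_d N` are injective, so `r ≤ m₁` and `k ≤ m₂`, which together with
`r + k = n = m₁ + m₂` makes both blocks square.
-/

open Polynomial Matrix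

variable {K : Type*} [Field K]

namespace Matrix

variable {R : Type*} [CommRing R] {m m₁ m₂ n o p : Type*}
variable [Fintype n]

theorem exists_mul_eq_of_forall_col_mem_range {F : Matrix m n R} {T : Matrix m o R}
    (hT : ∀ j, ∃ v, F *ᵥ v = T.col j) : ∃ V : Matrix n o R, F * V = T := by
  choose v hv using hT
  exact ⟨(of v)ᵀ, ext fun i j => congrFun (hv j) i⟩

section fromCols

variable [Fintype o] [Fintype p] {F : Matrix m n R} {V : Matrix n o R} {N : Matrix n p R}

theorem mulVec_fromCols_injective (hFV : Function.Injective (F * V).mulVec)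
    (hN : Function.Injective N.mulVec) (hFN : F * N = 0) :
    Function.Injective (fromCols V N).mulVec := by
  rw [← coe_mulVecLin, injective_iff_map_eq_zero]
  intro w hw
  rw [mulVecLin_apply, ← Sum.elim_comp_inl_inr w, fromCols_mulVec_sumElim] at hw
  have ha : w ∘ Sum.inl = 0 := hFV <| by
    simpa [mulVec_add, mulVec_mulVec, hFN] using congrArg F.mulVec hw
  have hb : w ∘ Sum.inr = 0 := hN <| by simpa [ha] using hw
  rw [← Sum.elim_comp_inl_inr w, ha, hb, Sum.elim_zero_zero]

theorem mulVec_fromCols_surjective (hFV : ∀ q, ∃ a, (F * V) *ᵥ a = F *ᵥ q)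
    (hker : ∀ q, F *ᵥ q = 0 → ∃ b, N *ᵥ b = q) :
    Function.Surjective (fromCols V N).mulVec := by
  intro q
  obtain ⟨a, ha⟩ := hFV q
  obtain ⟨b, hb⟩ := hker (q - V *ᵥ a) <| by rw [mulVec_sub, mulVec_mulVec, ha, sub_self]
  refine ⟨Sum.elim a b, ?_⟩
  rw [fromCols_mulVec_sumElim, hb, add_sub_cancel]

end fromCols

theorem exists_two_sided_inverse_of_mulVec_bijective [Fintype m] [DecidableEq m] [DecidableEq n]
    {A : Matrix m n R} (hA : Function.Bijective A.mulVec) :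
    ∃ B : Matrix n m R, A * B = 1 ∧ B * A = 1 := by
  obtain ⟨B, hAB⟩ := mulVec_surjective_iff_exists_right_inverse.mp hA.2
  refine ⟨B, hAB, mulVec_injective <| funext fun v => hA.1 ?_⟩
  rw [mulVec_mulVec, mulVec_mulVec, ← Matrix.mul_assoc, hAB, Matrix.one_mul, Matrix.mul_one]

theorem card_eq_of_mulVec_bijective [InvariantBasisNumber R] [Fintype m] {A : Matrix m n R}
    (hA : Function.Bijective A.mulVec) : Fintype.card n = Fintype.card m :=
  card_eq_of_linearEquiv R (LinearEquiv.ofBijective A.mulVecLin hA)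

theorem card_le_of_mulVec_injective [StrongRankCondition R] [Fintype m] {A : Matrix m n R}
    (hA : Function.Injective A.mulVec) : Fintype.card n ≤ Fintype.card m :=
  card_le_of_injective R A.mulVecLin hA

theorem mulVec_mul_injective_of_fromRows [Fintype p] {Fu : Matrix m₁ n R}
    {Fd : Matrix m₂ n R} {N : Matrix n p R} (hF : Function.Injective (fromRows Fu Fd).mulVec)
    (hN : Function.Injective N.mulVec) (hFuN : Fu * N = 0) :
    Function.Injective (Fd * N).mulVec := by
  intro x y hxy
  apply hF.comp hN
  simp only [Function.comp_apply, mulVec_mulVec, fromRows_mul, hFuN, fromRows_mulVec, zero_mulVec,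
    hxy]

end Matrix

/-- Lemma 2: given a column basis `G₁` and a kernel basis `N` of the upper
part `F_u` of `F = [F_u; F_d]`, there is `V` such that `U = [V, N]` is unimodular (in particular
`r + k = n`), `F_u·V = G₁`, and `F·U = [[G₁, 0], [F_d·V, G₂]]` with `G₂ = F_d·N`.  Moreover if
`F` is square and nonsingular then `G₁` and `G₂` are square and nonsingular. -/
theorem column_basis_kernel_basis_triangularization {m1 m2 n r k : ℕ}
    (Fu : Matrix (Fin m1) (Fin n) (Polynomial K))
    (Fd : Matrix (Fin m2) (Fin n) (Polynomial K))
    (G1 : Matrix (Fin m1) (Fin r) (Polynomial K)) (hG1 : IsColBasis Fu G1)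
    (N : Matrix (Fin n) (Fin k) (Polynomial K)) (hN : IsKernelBasis Fu N) :
    r + k = n ∧
    ∃ V : Matrix (Fin n) (Fin r) (Polynomial K),
      Fu * V = G1 ∧
      (∃ W : Matrix (Fin r ⊕ Fin k) (Fin n) (Polynomial K),
        fromCols V N * W = 1 ∧ W * fromCols V N = 1) ∧
      fromRows Fu Fd * fromCols V N = fromBlocks G1 0 (Fd * V) (Fd * N) ∧
      (m1 + m2 = n → Function.Injective (fromRows Fu Fd).mulVec →
        r = m1 ∧ k = m2 ∧
          Function.Injective G1.mulVec ∧ Function.Injective (Fd * N).mulVec) := by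
  obtain ⟨hG1li, hG1span⟩ := hG1
  obtain ⟨hNli, hFuN, hNspan⟩ := hN
  have hG1inj : Function.Injective G1.mulVec := mulVec_injective_iff.mpr hG1li
  have hNinj : Function.Injective N.mulVec := mulVec_injective_iff.mpr hNli
  obtain ⟨V, hFuV⟩ := exists_mul_eq_of_forall_col_mem_range fun j =>
    (hG1span _).mpr ⟨Pi.single j 1, mulVec_single_one G1 j⟩
  have hU : Function.Bijective (fromCols V N).mulVec :=
    ⟨mulVec_fromCols_injective (hFuV ▸ hG1inj) hNinj hFuN,
      mulVec_fromCols_surjective (fun q => hFuV ▸ (hG1span _).mp ⟨q, rfl⟩) hNspan⟩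
  have hrk : r + k = n := by simpa using card_eq_of_mulVec_bijective hU
  refine ⟨hrk, V, hFuV, exists_two_sided_inverse_of_mulVec_bijective hU, ?_, ?_⟩
  · rw [fromRows_mul_fromCols, hFuV, hFuN]
  · intro hmn hF
    have hG2inj := mulVec_mul_injective_of_fromRows hF hNinj hFuN
    have hr : r ≤ m1 := by simpa using card_le_of_mulVec_injective hG1inj
    have hk : k ≤ m2 := by simpa using card_le_of_mulVec_injective hG2inj
    exact ⟨by omega, by omega, hG1inj, hG2inj⟩
end

section
/- Let K be a field and F ∈ K[x]^{n×n} be nonsingular and column reduced, let U ∈ K[x]^{n×n} be the unimodular matrix with F·U = H the Hermite normal form of F, let s = (s_1,…,s_n) be the degrees of the diagonal entries of H, s_max = max_i s_i, and u = (s_max,…,s_max) ∈ ℤ^n. Then the 2n×n stacked matrix M = [U; H] is a [−u,−s]-minimal kernel basis of the n×2n matrix [F, −I_n]; in particular M is a kernel basis of [F, −I_n], all its [−u,−s]-column degrees equal 0, and M is [−u,−s]-column reduced. -/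
/-!
Since `F U = H` with `U` unimodular, the kernel of `[F, -I]` is the graph `{(p, F p)}`, and the
columns of `[U; H]` generate it. For the degrees: row `i` of the Hermite form has degree at most
`s_i` and a monic diagonal entry of degree exactly `s_i`, so the `[-u,-s]`-leading coefficient
matrix of `[U; H]` (for column degrees `0`) has the identity as its bottom block, hence full
column rank. The top block needs `deg U ≤ s_max`, which is the predictable degree property of
the column reduced `F` applied to `F U = H`.
-/

open Polynomial Matrix

variable {K : Type*} [Field K]

lemma degZ_le_natCast_iff {p : K[X]} {t : ℕ} :
    degZ p ≤ ((t : ℤ) : WithBot ℤ) ↔ p.degree ≤ t := by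
  unfold degZ
  cases p.degree <;> simp [Nat.cast_withBot]

lemma degZ_add_neg_le_zero {p : K[X]} {t : ℕ} (h : p.degree ≤ t) :
    degZ p + ((-(t : ℤ) : ℤ) : WithBot ℤ) ≤ 0 := by
  rw [← degZ_le_natCast_iff] at h
  cases hp : degZ p with
  | bot => simp
  | coe d =>
    rw [hp] at h
    have : d ≤ t := by exact_mod_cast h
    exact_mod_cast (by omega : d + -(t : ℤ) ≤ 0)

lemma degZ_eq_natCast {p : K[X]} {t : ℕ} (h : p.degree = t) :
    degZ p = ((t : ℤ) : WithBot ℤ) := by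
  simp [degZ, h]

section PolynomialMatrix

variable {m n : Type*}

lemma IsColReducedWith.degZ_le [Fintype m] {u : m → ℤ} {A : Matrix m n K[X]} {v : n → ℤ}
    (hA : IsColReducedWith u A v) (i : m) (j : n) :
    degZ (A i j) + (u i : WithBot ℤ) ≤ v j :=
  hA.1 j ▸ Finset.le_sup (f := fun i => degZ (A i j) + (u i : WithBot ℤ)) (Finset.mem_univ i)

lemma IsColReducedWith.exists_degZ_add_eq [Fintype m] {u : m → ℤ} {A : Matrix m n K[X]}
    {v : n → ℤ} (hA : IsColReducedWith u A v) (j : n) :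
    ∃ i, degZ (A i j) + (u i : WithBot ℤ) = v j := by
  have hne : (Finset.univ : Finset m).Nonempty := by
    by_contra h
    have := hA.1 j
    simp [cdegS, Finset.not_nonempty_iff_eq_empty.mp h] at this
  obtain ⟨i, -, hi⟩ :=
    Finset.exists_mem_eq_sup _ hne fun i => degZ (A i j) + (u i : WithBot ℤ)
  exact ⟨i, hi ▸ hA.1 j⟩

lemma IsColReducedS.exists_isColReducedNat [Fintype m] {F : Matrix m n K[X]}
    (hF : IsColReducedS (fun _ => (0 : ℤ)) F) : ∃ d : n → ℕ, IsColReducedNat F d := by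
  obtain ⟨v, hv⟩ := hF
  have hv0 : ∀ j, 0 ≤ v j := by
    intro j
    obtain ⟨i, hi⟩ := hv.exists_degZ_add_eq j
    cases h : (F i j).degree with
    | bot => simp [degZ, h] at hi
    | coe e =>
      simp only [degZ, h, WithBot.map_coe, WithBot.coe_zero, add_zero] at hi
      have : (e : ℤ) = v j := by exact_mod_cast hi
      omega
  refine ⟨fun j => (v j).toNat, ?_⟩
  have hv' : (fun j => ((v j).toNat : ℤ)) = v := funext fun j => Int.toNat_of_nonneg (hv0 j)
  rw [IsColReducedNat, hv']
  exact hv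

lemma IsColReducedNat.degree_le [Fintype m] {F : Matrix m n K[X]} {d : n → ℕ}
    (hF : IsColReducedNat F d) (i : m) (j : n) : (F i j).degree ≤ d j := by
  rw [← degZ_le_natCast_iff]
  simpa using hF.degZ_le i j

lemma lcoeffS_zero_natCast (A : Matrix m n K[X]) (d : n → ℕ) :
    lcoeffS (fun _ => (0 : ℤ)) A (fun j => (d j : ℤ)) =
      Matrix.of fun i j => (A i j).coeff (d j) := by
  ext i j
  simp [lcoeffS]

lemma lcoeffS_neg_natCast_zero (u : m → ℕ) (A : Matrix m n K[X]) :
    lcoeffS (fun i => -(u i : ℤ)) A 0 = Matrix.of fun i j => (A i j).coeff (u i) := by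
  ext i j
  simp [lcoeffS]

lemma Polynomial.coeff_mulVec_of_degree_add_le {R : Type*} [Semiring R] [Fintype n]
    {F : Matrix m n R[X]} {d : n → ℕ} (hF : ∀ i j, (F i j).degree ≤ d j) {p : n → R[X]}
    {e : ℕ} (hp : ∀ j, (p j).degree + d j ≤ e) (i : m) :
    ((F *ᵥ p) i).coeff e = ∑ j, (F i j).coeff (d j) * (p j).coeff (e - d j) := by
  simp only [mulVec, dotProduct, finsetSum_coeff]
  refine Finset.sum_congr rfl fun j _ => ?_
  by_cases hpj : p j = 0
  · simp [hpj]
  have hdeg : (p j).natDegree + d j ≤ e := by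
    have := hp j
    rw [degree_eq_natDegree hpj] at this
    exact_mod_cast this
  have hsplit : d j + (e - d j) = e := by omega
  conv_lhs => rw [← hsplit]
  exact coeff_mul_add_eq_of_natDegree_le (natDegree_le_iff_degree_le.mpr (hF i j)) (by omega)

/-- One direction of the predictable degree property of column reduced matrices. -/
lemma IsColReducedNat.degree_add_le_of_mulVec [Fintype m] [Fintype n]
    {F : Matrix m n K[X]} {d : n → ℕ} (hF : IsColReducedNat F d) {p : n → K[X]}
    {t : WithBot ℕ} (hFp : ∀ i, ((F *ᵥ p) i).degree ≤ t) (k : n) :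
    (p k).degree + d k ≤ t := by
  obtain ⟨k₁, -, hk₁⟩ := Finset.exists_mem_eq_sup _ ⟨k, Finset.mem_univ k⟩
    fun k => (p k).degree + d k
  have hle : ∀ k, (p k).degree + d k ≤ (p k₁).degree + d k₁ := fun k =>
    hk₁ ▸ Finset.le_sup (f := fun k => (p k).degree + d k) (Finset.mem_univ k)
  refine (hle k).trans ?_
  by_cases hpk₁ : p k₁ = 0
  · simp [hpk₁]
  set e := (p k₁).natDegree + d k₁
  rw [degree_eq_natDegree hpk₁] at hle ⊢
  -- `c` is the degree-`e` coefficient of `x^{-d} p`; the leading coefficient matrix of `F` maps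
  -- it to the degree-`e` coefficients of `F p`.
  set c : n → K := fun j => (p j).coeff (e - d j)
  have hc : c ≠ 0 := fun h => by
    have hck₁ : c k₁ = (p k₁).leadingCoeff := by simp [c, e]
    exact leadingCoeff_ne_zero.mpr hpk₁ (hck₁ ▸ congrFun h k₁)
  have hrank := hF.2
  rw [FullColRankK, lcoeffS_zero_natCast] at hrank
  obtain ⟨i, hi⟩ := Function.ne_iff.mp <|
    mulVec_zero (Matrix.of fun i j => (F i j).coeff (d j)) ▸
      (Matrix.mulVec_injective_iff.mpr hrank).ne hc
  have hcoeff : ((F *ᵥ p) i).coeff e ≠ 0 := by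
    rw [coeff_mulVec_of_degree_add_le hF.degree_le (by exact_mod_cast hle)]
    simpa [mulVec, dotProduct] using hi
  exact_mod_cast (le_degree_of_ne_zero hcoeff).trans (hFp i)

lemma FullColRankK.fromRows_of_right {m₁ m₂ : Type*} {A : Matrix m₁ n K} {B : Matrix m₂ n K}
    (hB : FullColRankK B) : FullColRankK (fromRows A B) :=
  LinearIndependent.of_comp (LinearMap.funLeft K K Sum.inr) hB

lemma isColReducedWith_neg_zero [Fintype m] {A : Matrix m n K[X]} (u : m → ℕ)
    (hdeg : ∀ i j, (A i j).degree ≤ u i)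
    (hrank : FullColRankK (Matrix.of fun i j => (A i j).coeff (u i))) :
    IsColReducedWith (fun i => -(u i : ℤ)) A 0 := by
  refine ⟨fun j => le_antisymm ?_ ?_, by rwa [lcoeffS_neg_natCast_zero]⟩
  · exact Finset.sup_le fun i _ => degZ_add_neg_le_zero (hdeg i j)
  · obtain ⟨i, hi⟩ := Function.ne_iff.mp (hrank.ne_zero j)
    have hdi : (A i j).degree = u i := degree_eq_of_le_of_coeff_ne_zero (hdeg i j) hi
    refine le_trans ?_ <| Finset.le_sup
      (f := fun i => degZ (A i j) + ((-(u i : ℤ) : ℤ) : WithBot ℤ)) (Finset.mem_univ i)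
    simp [degZ_eq_natCast hdi, ← WithBot.coe_add]

lemma fromCols_neg_one_mulVec_eq_zero_iff [Fintype m] [DecidableEq m] [Fintype n]
    (F : Matrix m n K[X]) (q : n ⊕ m → K[X]) :
    fromCols F (-1) *ᵥ q = 0 ↔ F *ᵥ (q ∘ Sum.inl) = q ∘ Sum.inr := by
  rw [← Sum.elim_comp_inl_inr q, fromCols_mulVec_sumElim, neg_mulVec, one_mulVec,
    ← sub_eq_add_neg, sub_eq_zero]
  rfl

lemma isKernelBasis_fromCols_neg_one [Fintype m] [DecidableEq m] [Fintype n]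
    [DecidableEq n] (F : Matrix m n K[X]) {U : Matrix n n K[X]} (hU : IsUnit U.det) :
    IsKernelBasis (fromCols F (-1)) (fromRows U (F * U)) := by
  have hUunit : IsUnit U := (isUnit_iff_isUnit_det U).mpr hU
  refine ⟨?_, by simp [fromCols_mul_fromRows],
    fun q hq => ⟨U⁻¹ *ᵥ (q ∘ Sum.inl), ?_⟩⟩
  · exact LinearIndependent.of_comp (LinearMap.funLeft K[X] K[X] Sum.inl)
      (mulVec_injective_iff.mp (mulVec_injective_of_isUnit hUunit))
  · rw [fromCols_neg_one_mulVec_eq_zero_iff] at hq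
    have hUU : U *ᵥ (U⁻¹ *ᵥ (q ∘ Sum.inl)) = q ∘ Sum.inl := by
      rw [mulVec_mulVec, mul_nonsing_inv U hU, one_mulVec]
    rw [fromRows_mulVec, ← mulVec_mulVec, hUU, hq, Sum.elim_comp_inl_inr]

end PolynomialMatrix

lemma IsHermiteForm.degree_le {n : ℕ} {H : Matrix (Fin n) (Fin n) K[X]} (hH : IsHermiteForm H)
    (i j : Fin n) : (H i j).degree ≤ (H i i).natDegree := by
  rcases lt_trichotomy i j with h | rfl | h
  · simp [hH.1 i j h]
  · exact degree_le_natDegree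
  · exact (hH.2.2 i j h).le.trans degree_le_natDegree

lemma IsHermiteForm.of_coeff_natDegree_eq_one {n : ℕ} {H : Matrix (Fin n) (Fin n) K[X]}
    (hH : IsHermiteForm H) : Matrix.of (fun i j => (H i j).coeff (H i i).natDegree) = 1 := by
  ext i j
  rcases lt_trichotomy i j with h | rfl | h
  · simp [hH.1 i j h, h.ne]
  · simpa using (hH.2.1 i).coeff_natDegree
  · simpa [h.ne'] using coeff_eq_zero_of_degree_lt
      ((hH.2.2 i j h).trans_le degree_le_natDegree)

theorem stacked_unimodular_hermite_is_minimal_kernel_basis_general {n : ℕ}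
    (F U H : Matrix (Fin n) (Fin n) (Polynomial K))
    (hFcr : IsColReducedS (fun _ => (0 : ℤ)) F)
    (hU : IsUnit U.det) (hFU : F * U = H) (hHf : IsHermiteForm H)
    (s : Fin n → ℕ) (hs : ∀ i, s i = (H i i).natDegree)
    (smax : ℕ) (hsmax : smax = Finset.univ.sup s) :
    IsMinimalKernelBasis (fromCols F (-1))
      (Sum.elim (fun _ : Fin n => -(smax : ℤ)) (fun i => -(s i : ℤ)))
      (fromRows U H) ∧
    (∀ j : Fin n, cdegS (Sum.elim (fun _ : Fin n => -(smax : ℤ)) (fun i => -(s i : ℤ)))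
      (fun i => fromRows U H i j) = (0 : WithBot ℤ)) ∧
    IsColReducedS (Sum.elim (fun _ : Fin n => -(smax : ℤ)) (fun i => -(s i : ℤ)))
      (fromRows U H) := by
  obtain ⟨d, hFd⟩ := hFcr.exists_isColReducedNat
  have hHdeg : ∀ i j, (H i j).degree ≤ s i := fun i j => hs i ▸ hHf.degree_le i j
  have hsmax_le : ∀ i, s i ≤ smax := fun i => hsmax ▸ Finset.le_sup (Finset.mem_univ i)
  have hUdeg : ∀ i j, (U i j).degree ≤ smax := fun i j => by
    have hFUj : ∀ k, ((F * U) k j).degree ≤ smax := fun k =>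
      hFU ▸ (hHdeg k j).trans (by exact_mod_cast hsmax_le k)
    exact (le_add_of_nonneg_right (WithBot.coe_nonneg.mpr (d i).zero_le)).trans
      (hFd.degree_add_le_of_mulVec (p := fun k => U k j) hFUj i)
  have hlcoeff : Matrix.of (fun i j => (fromRows U H i j).coeff (Sum.elim (fun _ => smax) s i)) =
      fromRows (Matrix.of fun i j => (U i j).coeff smax) 1 := by
    ext (i | i) j
    · rfl
    · simpa [hs] using congrFun₂ hHf.of_coeff_natDegree_eq_one i j
  have hred :
      IsColReducedWith (fun i => -((Sum.elim (fun _ => smax) s i : ℕ) : ℤ)) (fromRows U H) 0 :=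
    isColReducedWith_neg_zero _ (by rintro (i | i) j; exacts [hUdeg i j, hHdeg i j])
      (hlcoeff ▸ .fromRows_of_right (linearIndependent_cols_iff_isUnit.mpr isUnit_one))
  have hshift : Sum.elim (fun _ : Fin n => -(smax : ℤ)) (fun i => -(s i : ℤ)) =
      fun i => -((Sum.elim (fun _ => smax) s i : ℕ) : ℤ) := by
    funext i; cases i <;> rfl
  rw [hshift]
  exact ⟨⟨hFU ▸ isKernelBasis_fromCols_neg_one F hU, 0, hred⟩, hred.1, 0, hred⟩

/-- the stacked matrix `M = [U; H]`, where `F·U = H` is the Hermite normal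
form of `F`, is a `[-u,-s]`-minimal kernel basis of `[F, -I]`; in particular it is a kernel
basis, all its `[-u,-s]`-column degrees equal `0`, and it is `[-u,-s]`-column reduced. -/
theorem stacked_unimodular_hermite_is_minimal_kernel_basis {n : ℕ}
    (F U H : Matrix (Fin n) (Fin n) (Polynomial K))
    (hFns : F.det ≠ 0) (hFcr : IsColReducedS (fun _ => (0 : ℤ)) F)
    (hU : IsUnit U.det) (hFU : F * U = H) (hHf : IsHermiteForm H)
    (s : Fin n → ℕ) (hs : ∀ i, s i = (H i i).natDegree)
    (smax : ℕ) (hsmax : smax = Finset.univ.sup s) :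
    IsMinimalKernelBasis (fromCols F (-1))
      (Sum.elim (fun _ : Fin n => -(smax : ℤ)) (fun i => -(s i : ℤ)))
      (fromRows U H) ∧
    (∀ j : Fin n, cdegS (Sum.elim (fun _ : Fin n => -(smax : ℤ)) (fun i => -(s i : ℤ)))
      (fun i => fromRows U H i j) = (0 : WithBot ℤ)) ∧
    IsColReducedS (Sum.elim (fun _ : Fin n => -(smax : ℤ)) (fun i => -(s i : ℤ)))
      (fromRows U H) :=
  stacked_unimodular_hermite_is_minimal_kernel_basis_general F U H hFcr hU hFU hHf s hs smax hsmax
end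

section
/- Let K be a field, let H ∈ K[x]^{n×n} be in Hermite normal form, and let A ∈ K[x]^{n×k} be a matrix such that H is a column basis of A and the row degrees of A equal the row degrees of H (namely s = (deg h_11,…,deg h_nn)). Then there exists a constant matrix B ∈ K^{n×k} of rank n with A = H·B, and consequently there exists an invertible constant matrix U ∈ K^{k×k} such that A·U = [H, 0], i.e. the principal n×n submatrix of A·U is H and the remaining columns are zero. -/
open Polynomial Matrix

variable {K : Type*} [Field K]

/-!
Since `A` and `H` have the same column space, `A = H M` and `H = A P` for polynomial matrices
`M` and `P`. Forward substitution along the triangular `H` shows that `M` is constant: entry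
`(i, j)` of `H M` is `h_ii M_ij` plus terms of degree `< deg h_ii`, and it has degree
`≤ deg h_ii`. As the columns of `H` are independent, `H M P = H` gives `M P = 1`, so `B = M`
has the constant right inverse `P(0)` and rank `n`. Its rows then extend to an invertible
matrix `W`, and `U = W⁻¹` satisfies `B U = [I, 0]`.
-/

theorem Polynomial.Monic.degree_le_zero_of_degree_mul_le {R : Type*} [Semiring R] [Nontrivial R]
    {p q : R[X]} (hp : p.Monic) (h : (p * q).degree ≤ p.degree) : q.degree ≤ 0 := by
  by_cases hq : q = 0
  · simp [hq]
  rw [hp.degree_mul_comm, hp.degree_mul, degree_eq_natDegree hp.ne_zero,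
    degree_eq_natDegree hq] at h
  rw [degree_eq_natDegree hq]
  norm_cast at h ⊢
  omega

theorem IsHermiteForm.degree_le_zero_of_degree_mul_le {ι : Type*} {n : ℕ}
    {H : Matrix (Fin n) (Fin n) K[X]} (hH : IsHermiteForm H) {M : Matrix (Fin n) ι K[X]}
    (hM : ∀ i j, ((H * M) i j).degree ≤ (H i i).degree) (i : Fin n) (j : ι) :
    (M i j).degree ≤ 0 := by
  obtain ⟨hupper, hmonic, hdeg⟩ := hH
  induction i using WellFoundedLT.induction with
  | ind i ih =>
  have hbot : ⊥ < (H i i).degree := bot_lt_iff_ne_bot.2 (degree_ne_bot.2 (hmonic i).ne_zero)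
  have hrest : (∑ l ∈ Finset.univ.erase i, H i l * M l j).degree < (H i i).degree := by
    refine (degree_sum_le _ _).trans_lt ((Finset.sup_lt_iff hbot).2 fun l hl => ?_)
    rcases lt_or_gt_of_ne (Finset.ne_of_mem_erase hl) with hli | hil
    · calc (H i l * M l j).degree ≤ (H i l).degree + (M l j).degree := degree_mul_le _ _
        _ ≤ (H i l).degree := add_le_of_nonpos_right (ih l hli)
        _ < (H i i).degree := hdeg i l hli
    · simpa [hupper i l hil] using hbot
  have hdiag : H i i * M i j = (H * M) i j - ∑ l ∈ Finset.univ.erase i, H i l * M l j := by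
    rw [mul_apply, ← Finset.add_sum_erase _ _ (Finset.mem_univ i), add_sub_cancel_right]
  refine (hmonic i).degree_le_zero_of_degree_mul_le ?_
  rw [hdiag]
  exact (degree_sub_le _ _).trans (max_le (hM i j) hrest.le)

theorem Matrix.exists_eq_mul_of_range_mulVec_subset {m n k R : Type*} [CommSemiring R]
    [Fintype n] [Fintype k] [DecidableEq k] {F : Matrix m k R} {T : Matrix m n R}
    (h : Set.range F.mulVec ⊆ Set.range T.mulVec) : ∃ M : Matrix n k R, F = T * M := by
  choose p hp using fun j => h ⟨Pi.single j 1, rfl⟩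
  refine ⟨(Matrix.of p)ᵀ, Matrix.ext fun i j => ?_⟩
  have hij := congrFun (hp j) i
  rw [mulVec_single_one] at hij
  rw [mul_apply]
  simpa [mulVec, dotProduct] using hij.symm

theorem Matrix.mul_map_eval_eq_one {m n R : Type*} [CommSemiring R] [Fintype n]
    [DecidableEq m] {B : Matrix m n R} {P : Matrix n m R[X]} (h : B.map C * P = 1) (x : R) :
    B * P.map (eval x) = 1 := by
  have h' := congrArg (Matrix.map · (evalRingHom x)) h
  rw [Matrix.map_mul, Matrix.map_map, Matrix.map_one _ (map_zero _) (map_one _)] at h'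
  simpa [Function.comp_def] using h'

theorem Matrix.rank_eq_card_height_of_mul_eq_one {m n R : Type*} [CommRing R]
    [StrongRankCondition R] [Fintype m] [Fintype n] [DecidableEq m] {B : Matrix m n R}
    {Q : Matrix n m R} (hBQ : B * Q = 1) : B.rank = Fintype.card m :=
  le_antisymm (rank_le_card_height B) (by simpa [hBQ, rank_one] using rank_mul_le_left B Q)

theorem Matrix.linearIndependent_row_of_mul_eq_one {m n R : Type*} [CommRing R] [Fintype m]
    [Fintype n] [DecidableEq m] {B : Matrix m n R} {Q : Matrix n m R} (hBQ : B * Q = 1) :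
    LinearIndependent R B.row :=
  vecMul_injective_iff.mp fun x y hxy => by
    simpa [vecMul_vecMul, hBQ] using congrArg (· ᵥ* Q) hxy

def Matrix.idZero (n k : ℕ) (R : Type*) [Zero R] [One R] : Matrix (Fin n) (Fin k) R :=
  of fun i j => if (i : ℕ) = j then 1 else 0

theorem Matrix.idZero_map {R S : Type*} [NonAssocSemiring R] [NonAssocSemiring S] (n k : ℕ)
    (f : R →+* S) : (idZero n k R).map f = idZero n k S :=
  Matrix.ext fun i j => by simp [idZero, apply_ite f]

theorem Matrix.mul_idZero_apply {m R : Type*} [NonAssocSemiring R] {n k : ℕ}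
    (H : Matrix m (Fin n) R) (i : m) (j : Fin k) :
    (H * idZero n k R) i j = if h : (j : ℕ) < n then H i ⟨j, h⟩ else 0 := by
  rw [mul_apply]
  split_ifs with hj
  · rw [Finset.sum_eq_single ⟨j, hj⟩ (fun l _ hl => ?_) (by simp)]
    · simp [idZero]
    · simp [idZero, Fin.ext_iff.not.mp hl]
  · exact Finset.sum_eq_zero fun l _ => by simp [idZero, show (l : ℕ) ≠ j by omega]

theorem Matrix.exists_isUnit_det_mul_eq_idZero {n k : ℕ}
    {B : Matrix (Fin n) (Fin k) K} (hB : LinearIndependent K B.row) :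
    ∃ U : Matrix (Fin k) (Fin k) K, IsUnit U.det ∧ B * U = idZero n k K := by
  let b := Module.Basis.sumExtend hB
  have hb : ∀ i, b (Sum.inl i) = B i := fun i => by simp [b, Module.Basis.sumExtend]; rfl
  have := Module.Finite.finite_basis b
  have : Finite (Module.Basis.sumExtendIndex hB) :=
    .of_injective (Sum.inr (α := Fin n)) Sum.inr_injective
  let := Fintype.ofFinite (Module.Basis.sumExtendIndex hB)
  have hcard : n + Fintype.card (Module.Basis.sumExtendIndex hB) = k := by
    simpa using (Module.finrank_eq_card_basis b).symm
  let e := ((Equiv.refl _).sumCongr (Fintype.equivFin _)).trans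
    (finSumFinEquiv.trans (finCongr hcard))
  let W : Matrix (Fin k) (Fin k) K := Matrix.of fun j => b (e.symm j)
  have hW : IsUnit W.det := (isUnit_iff_isUnit_det W).mp <|
    linearIndependent_rows_iff_isUnit.mp (b.linearIndependent.comp _ e.symm.injective)
  refine ⟨W⁻¹, isUnit_nonsing_inv_det W hW, Matrix.ext fun i j => ?_⟩
  have hBW : (B * W⁻¹) i j = (W * W⁻¹) (e (Sum.inl i)) j := by
    simp [mul_apply, W, hb]
  rw [hBW, mul_nonsing_inv W hW, one_apply]
  simp [idZero, e, Fin.ext_iff]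

/-- Lemma 3: if `H` (in Hermite normal form) is a column basis of `A` and
`A` has the same row degrees as `H`, then `A = H·B` for a constant matrix `B` of rank `n`,
and some invertible constant matrix `U` brings `A` to the form `[H, 0]`. -/
theorem recover_hermite_from_column_basis {n k : ℕ}
    (H : Matrix (Fin n) (Fin n) (Polynomial K)) (hH : IsHermiteForm H)
    (A : Matrix (Fin n) (Fin k) (Polynomial K)) (hCB : IsColBasis A H)
    (hrd : ∀ i, rdeg A i = (H i i).degree) :
    (∃ B : Matrix (Fin n) (Fin k) K, B.rank = n ∧ A = H * B.map Polynomial.C) ∧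
    ∃ U : Matrix (Fin k) (Fin k) K, IsUnit U.det ∧
      ∀ (i : Fin n) (j : Fin k),
        (A * U.map Polynomial.C) i j = if h : (j : ℕ) < n then H i ⟨(j : ℕ), h⟩ else 0 := by
  obtain ⟨hHindep, hrange⟩ := hCB
  obtain ⟨M, hAM⟩ := exists_eq_mul_of_range_mulVec_subset fun q hq => (hrange q).1 hq
  obtain ⟨P, hHP⟩ := exists_eq_mul_of_range_mulVec_subset fun q hq => (hrange q).2 hq
  have hMconst := hH.degree_le_zero_of_degree_mul_le fun i j => by
    calc ((H * M) i j).degree = (A i j).degree := by rw [hAM]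
      _ ≤ rdeg A i := Finset.le_sup (f := fun j => (A i j).degree) (Finset.mem_univ j)
      _ = (H i i).degree := hrd i
  set B := M.map (coeff · 0)
  have hMB : M = B.map C := Matrix.ext fun i j => eq_C_of_degree_le_zero (hMconst i j)
  have hMP : M * P = 1 :=
    (isLeftRegular_iff_mulVec_injective.mpr (mulVec_injective_iff.mpr hHindep))
      (show H * (M * P) = H * 1 by rw [← Matrix.mul_assoc, ← hAM, ← hHP, Matrix.mul_one])
  have hBQ : B * P.map (eval 0) = 1 := mul_map_eval_eq_one (hMB ▸ hMP) 0
  obtain ⟨U, hU, hBU⟩ :=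
    exists_isUnit_det_mul_eq_idZero (linearIndependent_row_of_mul_eq_one hBQ)
  refine ⟨⟨B, by simpa using rank_eq_card_height_of_mul_eq_one hBQ, hMB ▸ hAM⟩, U, hU,
    fun i j => ?_⟩
  rw [hAM, hMB, Matrix.mul_assoc, ← Matrix.map_mul (f := C), hBU, idZero_map, mul_idZero_apply]
end

section
/- Let K be a field and let H ∈ K[x]^{n×n} be in Hermite normal form with diagonal degrees s = (s_1,…,s_n). Let d_max ≥ 1 be an integer, and for each i set q_i = ⌊s_i/d_max⌋ and r_i = s_i − q_i·d_max; let n̄ = n + Σ_i q_i, let E ∈ K[x]^{n×n̄} be the matrix [Ẽ_1,…,Ẽ_n] where Ẽ_i = [e_i, x^{s_i−q_i·d_max}·e_i, …, x^{s_i−d_max}·e_i] (q_i+1 columns, e_i the i-th standard basis column), and let s* ∈ ℤ^{n̄} be the concatenation over i of the q_i+1 entries (r_i, d_max, …, d_max). Then there exists a matrix H_E ∈ K[x]^{n̄×n} such that E·H_E = H and the row degrees of H_E are bounded componentwise by s* (equivalently, cdeg_{−s*} H_E ≤ 0). -/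
open Polynomial Matrix

variable {K : Type*} [Field K]

lemma degZ_le_of_natDegree_le {p : K[X]} {m : ℕ} (h : p.natDegree ≤ m) :
    degZ p ≤ ((m : ℤ) : WithBot ℤ) := by
  rcases eq_or_ne p 0 with rfl | hp
  · simp [degZ]
  · simpa [degZ, degree_eq_natDegree hp] using h

lemma IsHermiteForm.natDegree_le_diag {n : ℕ} {H : Matrix (Fin n) (Fin n) K[X]}
    (hH : IsHermiteForm H) (i j : Fin n) : (H i j).natDegree ≤ (H i i).natDegree := by
  rcases lt_trichotomy j i with hji | rfl | hij
  · exact natDegree_le_natDegree (hH.2.2 i j hji).le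
  · exact le_rfl
  · simp [hH.1 i j hij]

/-- The `k`-th entry of the block `Ẽ_i` of `E`, for `r = r_i` and `d = d_max`. -/
noncomputable def expansionMonomial (r d k : ℕ) : K[X] :=
  if k = 0 then 1 else X ^ (r + (k - 1) * d)

/-- The entry of `s*` matching `expansionMonomial r d k`. -/
def expansionDegree (r d k : ℕ) : ℕ :=
  if k = 0 then r else d

/-- Induction on `Q`: the quotient of `p` by `X ^ (r + Q d)` has degree at most `d` and becomes
the last coefficient, the remainder is expanded by the induction hypothesis. -/
theorem exists_sum_expansionMonomial_mul (r d Q : ℕ) (p : K[X])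
    (hp : p.natDegree ≤ r + Q * d) :
    ∃ c : Fin (Q + 1) → K[X], ∑ k : Fin (Q + 1), expansionMonomial r d k * c k = p ∧
      ∀ k, (c k).natDegree ≤ expansionDegree r d k := by
  induction Q generalizing p with
  | zero =>
    refine ⟨fun _ => p, by simp [expansionMonomial], fun k => ?_⟩
    simpa [expansionDegree, Fin.fin_one_eq_zero k] using hp
  | succ Q ih =>
    set L := r + Q * d
    have hXL : (X ^ L : K[X]).Monic := monic_X_pow L
    obtain ⟨c, hc_sum, hc_deg⟩ := ih (p %ₘ X ^ L)
      ((natDegree_modByMonic_le p hXL).trans (natDegree_X_pow L).le)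
    refine ⟨Fin.snoc c (p /ₘ X ^ L), ?_, fun k => ?_⟩
    · have hlast : expansionMonomial r d (Q + 1) = (X ^ L : K[X]) := by
        simp [expansionMonomial, L]
      simp only [Fin.sum_univ_castSucc, Fin.snoc_castSucc, Fin.snoc_last, Fin.val_castSucc,
        Fin.val_last, hc_sum, hlast]
      exact modByMonic_add_div p (X ^ L)
    · refine Fin.lastCases ?_ (fun k => ?_) k
      · rw [Fin.snoc_last, natDegree_divByMonic p hXL, natDegree_X_pow]
        simp only [expansionDegree, Fin.val_last, Nat.add_one_ne_zero, if_false]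
        rw [add_mul, one_mul] at hp
        omega
      · simpa only [Fin.snoc_castSucc, Fin.val_castSucc] using hc_deg k

theorem Matrix.mul_apply_of_eq_ite_fst {R ι l : Type*} [NonUnitalNonAssocSemiring R] [Fintype ι]
    [DecidableEq ι] {α : ι → Type*} [∀ i, Fintype (α i)] (v : ∀ i, α i → R)
    {E : Matrix ι (Σ i, α i) R} (hE : ∀ a c, E a c = if a = c.1 then v c.1 c.2 else 0)
    (M : Matrix (Σ i, α i) l R) (a : ι) (j : l) :
    (E * M) a j = ∑ k, v a k * M ⟨a, k⟩ j := by
  rw [mul_apply, ← Finset.univ_sigma_univ, Finset.sum_sigma,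
    Finset.sum_eq_single_of_mem a (Finset.mem_univ a)]
  · simp [hE]
  · intro i _ hia
    simp [hE, Ne.symm hia]

theorem hermite_expansion_exists_general {n : ℕ}
    (H : Matrix (Fin n) (Fin n) (Polynomial K)) (hH : IsHermiteForm H)
    (s : Fin n → ℕ) (hs : ∀ i, s i = (H i i).natDegree)
    (dmax : ℕ)
    (q r : Fin n → ℕ) (hq : ∀ i, q i = s i / dmax) (hr : ∀ i, r i = s i % dmax)
    (E : Matrix (Fin n) ((i : Fin n) × Fin (q i + 1)) (Polynomial K))
    (hE : ∀ (a : Fin n) (c : (i : Fin n) × Fin (q i + 1)),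
      E a c = if a = c.1 then
          (if c.2 = (0 : Fin (q c.1 + 1)) then 1
            else Polynomial.X ^ (r c.1 + ((c.2 : ℕ) - 1) * dmax))
        else 0)
    (sstar : ((i : Fin n) × Fin (q i + 1)) → ℤ)
    (hsstar : ∀ c, sstar c =
      if c.2 = (0 : Fin (q c.1 + 1)) then (r c.1 : ℤ) else (dmax : ℤ)) :
    ∃ HE : Matrix ((i : Fin n) × Fin (q i + 1)) (Fin n) (Polynomial K),
      E * HE = H ∧ ∀ c j, degZ (HE c j) ≤ (sstar c : WithBot ℤ) := by
  have hdeg (a j : Fin n) : (H a j).natDegree ≤ r a + q a * dmax := by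
    rw [hr, hq, mul_comm, Nat.mod_add_div, hs]
    exact hH.natDegree_le_diag a j
  choose c hc_sum hc_deg using fun a j => exists_sum_expansionMonomial_mul _ _ _ _ (hdeg a j)
  have hE' (a : Fin n) (x : (i : Fin n) × Fin (q i + 1)) :
      E a x = if a = x.1 then expansionMonomial (r x.1) dmax x.2 else 0 := by
    simp only [hE, expansionMonomial, Fin.ext_iff, Fin.val_zero]
  refine ⟨Matrix.of fun x j => c x.1 j x.2, Matrix.ext fun a j => ?_, fun x j => ?_⟩
  · rw [Matrix.mul_apply_of_eq_ite_fst (fun i (k : Fin (q i + 1)) => expansionMonomial (r i) dmax k) hE']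
    exact hc_sum a j
  · have hsx : sstar x = (expansionDegree (r x.1) dmax x.2 : ℕ) := by
      simp only [hsstar, expansionDegree, Fin.ext_iff, Fin.val_zero]
      split_ifs <;> rfl
    rw [hsx]
    exact degZ_le_of_natDegree_le (hc_deg x.1 j x.2)

/-- any matrix `H` in Hermite normal form with diagonal degrees `s` can be
expanded as `H = E · H_E` where the rows of `H_E` have degrees bounded by the expanded shift
`s*` (equivalently `cdeg_{-s*} H_E ≤ 0`).  Rows of `H_E` are indexed by the sigma type
`(i : Fin n) × Fin (q i + 1)`, of cardinality `n̄ = n + Σ q_i`. -/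
theorem hermite_expansion_exists {n : ℕ}
    (H : Matrix (Fin n) (Fin n) (Polynomial K)) (hH : IsHermiteForm H)
    (s : Fin n → ℕ) (hs : ∀ i, s i = (H i i).natDegree)
    (dmax : ℕ) (hd1 : 1 ≤ dmax)
    (q r : Fin n → ℕ) (hq : ∀ i, q i = s i / dmax) (hr : ∀ i, r i = s i % dmax)
    (E : Matrix (Fin n) ((i : Fin n) × Fin (q i + 1)) (Polynomial K))
    (hE : ∀ (a : Fin n) (c : (i : Fin n) × Fin (q i + 1)),
      E a c = if a = c.1 then
          (if c.2 = (0 : Fin (q c.1 + 1)) then 1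
            else Polynomial.X ^ (r c.1 + ((c.2 : ℕ) - 1) * dmax))
        else 0)
    (sstar : ((i : Fin n) × Fin (q i + 1)) → ℤ)
    (hsstar : ∀ c, sstar c =
      if c.2 = (0 : Fin (q c.1 + 1)) then (r c.1 : ℤ) else (dmax : ℤ)) :
    ∃ HE : Matrix ((i : Fin n) × Fin (q i + 1)) (Fin n) (Polynomial K),
      E * HE = H ∧ ∀ c j, degZ (HE c j) ≤ (sstar c : WithBot ℤ) :=
  hermite_expansion_exists_general H hH s hs dmax q r hq hr E hE sstar hsstar
end
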